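/- Suppose the step sizes satisfy ∑_{k=0}^{∞} α_k = +∞ and ∑_{k=0}^{∞} α_k² < +∞. Then liminf_{k→∞} E[‖∇f(x_k)‖] = 0. -/

import Mathlib

open MeasureTheory ProbabilityTheory Filter RealInnerProductSpace
open scoped NNReal

/-!
Smoothness gives the descent inequality `f y ≤ f x + ⟪∇f x, y - x⟫ + L/2 ‖y - x‖²`. Taking
expectations along `x_{k+1} = x_k - α_k g_k`, unbiasedness turns `𝔼⟪∇f(x_k), g_k⟫` into
`𝔼‖∇f(x_k)‖²` and the variance bound controls `𝔼‖g_k‖²`, so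
`𝔼 f(x_{k+1}) ≤ 𝔼 f(x_k) - α_k 𝔼‖∇f(x_k)‖² + L/2 α_k² (𝔼‖∇f(x_k)‖² + σ²/b)`.
As `α_k → 0`, telescoping against `f ≥ f⋆` and `∑ α_k² < ∞` gives `∑ α_k 𝔼‖∇f(x_k)‖² < ∞`.
Since `∑ α_k = ∞`, `𝔼‖∇f(x_k)‖²`, and by Jensen `𝔼‖∇f(x_k)‖`, is frequently arbitrarily small.
-/

theorem le_add_inner_gradient_add_half_mul_sq {H : Type*} [NormedAddCommGroup H]
    [InnerProductSpace ℝ H] [CompleteSpace H] {f : H → ℝ} (hf : Differentiable ℝ f) {K : ℝ≥0}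
    (hLip : LipschitzWith K (gradient f)) (x y : H) :
    f y ≤ f x + ⟪gradient f x, y - x⟫ + K / 2 * ‖y - x‖ ^ 2 := by
  set v := y - x
  set φ : ℝ → ℝ := fun t => f (x + t • v) - t * ⟪gradient f x, v⟫ - K / 2 * t ^ 2 * ‖v‖ ^ 2
  have hφ : ∀ t,
      HasDerivAt φ (⟪gradient f (x + t • v) - gradient f x, v⟫ - K * t * ‖v‖ ^ 2) t := by
    intro t
    have hline : HasDerivAt (fun t : ℝ => x + t • v) v t := by
      simpa using ((hasDerivAt_id t).smul_const v).const_add x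
    have hcomp := (hf (x + t • v)).hasFDerivAt.comp_hasDerivAt t hline
    rw [← inner_gradient_left] at hcomp
    refine ((hcomp.sub ((hasDerivAt_id t).mul_const ⟪gradient f x, v⟫)).sub
      (((hasDerivAt_pow 2 t).const_mul (K / 2 : ℝ)).mul_const (‖v‖ ^ 2))).congr_deriv ?_
    rw [inner_sub_left]
    push_cast
    ring
  have hφ_nonpos : ∀ t, 0 ≤ t →
      ⟪gradient f (x + t • v) - gradient f x, v⟫ - K * t * ‖v‖ ^ 2 ≤ 0 := by
    intro t ht
    have hgrad : ‖gradient f (x + t • v) - gradient f x‖ ≤ K * (t * ‖v‖) := by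
      simpa [← dist_eq_norm, norm_smul, abs_of_nonneg ht] using hLip.dist_le_mul (x + t • v) x
    have := (real_inner_le_norm _ v).trans (mul_le_mul_of_nonneg_right hgrad (norm_nonneg v))
    linarith
  obtain ⟨c, hc, hslope⟩ := exists_hasDerivAt_eq_slope φ _ zero_lt_one
    (continuous_iff_continuousAt.2 fun t => (hφ t).continuousAt).continuousOn
    (fun t _ => hφ t)
  have : φ 1 ≤ φ 0 := by
    have := hφ_nonpos c hc.1.le
    rw [hslope] at this
    linarith
  simp only [φ, one_smul, zero_smul, add_zero, v, add_sub_cancel] at this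
  linarith

theorem sq_integral_le_integral_sq {Ω : Type*} {m₀ : MeasurableSpace Ω} {μ : Measure Ω}
    [IsProbabilityMeasure μ] {X : Ω → ℝ} (hX : MemLp X 2 μ) :
    (∫ ω, X ω ∂μ) ^ 2 ≤ ∫ ω, X ω ^ 2 ∂μ := by
  have := variance_nonneg X μ
  rw [variance_eq_sub hX] at this
  simpa using this

section ConditionalMoments

variable {Ω E : Type*} {m m₀ : MeasurableSpace Ω} {μ : Measure Ω}
  [NormedAddCommGroup E] [InnerProductSpace ℝ E]

theorem MeasureTheory.MemLp.integrable_inner {g h : Ω → E} (hh : MemLp h 2 μ)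
    (hg : MemLp g 2 μ) : Integrable (fun ω => ⟪h ω, g ω⟫) μ := by
  refine (L2.integrable_inner (𝕜 := ℝ) (hh.toLp h) (hg.toLp g)).congr ?_
  filter_upwards [hg.coeFn_toLp, hh.coeFn_toLp] with ω hgω hhω
  rw [hgω, hhω]

/-- `condExpL2` is the orthogonal projection onto the `m`-measurable part of `L²`, so `g - h` is
orthogonal to `h`. -/
theorem integral_inner_eq_integral_norm_sq_of_condExp_eq [CompleteSpace E] [IsFiniteMeasure μ]
    (hm : m ≤ m₀) {g h : Ω → E} (hg : MemLp g 2 μ) (hh : MemLp h 2 μ)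
    (hh_meas : AEStronglyMeasurable[m] h μ) (hgh : μ[g | m] =ᵐ[μ] h) :
    ∫ ω, ⟪h ω, g ω⟫ ∂μ = ∫ ω, ‖h ω‖ ^ 2 ∂μ := by
  have hcond : (condExpL2 E ℝ hm (hg.toLp g) : Ω → E) =ᵐ[μ] h :=
    (hg.condExpL2_ae_eq_condExp hm).trans hgh
  calc ∫ ω, ⟪h ω, g ω⟫ ∂μ = ⟪hh.toLp h, hg.toLp g⟫ := by
        rw [L2.inner_def]
        refine integral_congr_ae ?_
        filter_upwards [hg.coeFn_toLp, hh.coeFn_toLp] with ω hgω hhω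
        rw [hgω, hhω]
    _ = ⟪(condExpL2 E ℝ hm (hg.toLp g) : Ω →₂[μ] E), hh.toLp h⟫ := by
        rw [real_inner_comm, inner_condExpL2_eq_inner_fun hm _ _
          (hh_meas.congr hh.coeFn_toLp.symm)]
    _ = ∫ ω, ‖h ω‖ ^ 2 ∂μ := by
        rw [L2.inner_def]
        refine integral_congr_ae ?_
        filter_upwards [hcond, hh.coeFn_toLp] with ω hcω hhω
        rw [hcω, hhω, real_inner_self_eq_norm_sq]

theorem integral_norm_sq_eq_of_condExp_eq [CompleteSpace E] [IsFiniteMeasure μ] (hm : m ≤ m₀)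
    {g h : Ω → E} (hg : MemLp g 2 μ) (hh : MemLp h 2 μ) (hh_meas : AEStronglyMeasurable[m] h μ)
    (hgh : μ[g | m] =ᵐ[μ] h) :
    ∫ ω, ‖g ω‖ ^ 2 ∂μ = ∫ ω, ‖g ω - h ω‖ ^ 2 ∂μ + ∫ ω, ‖h ω‖ ^ 2 ∂μ := by
  have hsq_int : ∀ {u : Ω → E}, MemLp u 2 μ → Integrable (fun ω => ‖u ω‖ ^ 2) μ :=
    fun hu => hu.integrable_norm_pow two_ne_zero
  have hexpand : ∀ ω, ‖g ω - h ω‖ ^ 2 = ‖g ω‖ ^ 2 - 2 * ⟪h ω, g ω⟫ + ‖h ω‖ ^ 2 := fun ω => by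
    rw [norm_sub_sq_real, real_inner_comm]
  have hinner := (hh.integrable_inner hg).const_mul 2
  simp_rw [hexpand]
  rw [integral_add (f := fun ω => ‖g ω‖ ^ 2 - 2 * ⟪h ω, g ω⟫) ((hsq_int hg).sub hinner)
      (hsq_int hh), integral_sub (hsq_int hg) hinner, integral_const_mul,
    integral_inner_eq_integral_norm_sq_of_condExp_eq hm hg hh hh_meas hgh]
  ring

theorem integral_le_of_ae_condExp_le [IsProbabilityMeasure μ] (hm : m ≤ m₀) {φ : Ω → ℝ} {c : ℝ}
    (hφ : ∀ᵐ ω ∂μ, μ[φ | m] ω ≤ c) : ∫ ω, φ ω ∂μ ≤ c := by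
  have : IsFiniteMeasure (μ.trim hm) := isFiniteMeasure_trim hm
  calc ∫ ω, φ ω ∂μ = ∫ ω, μ[φ | m] ω ∂μ := (integral_condExp hm).symm
    _ ≤ ∫ _, c ∂μ := integral_mono_ae integrable_condExp (integrable_const c) hφ
    _ = c := by simp

end ConditionalMoments

theorem summable_of_succ_add_le_add {F u v : ℕ → ℝ} {C : ℝ} (hu : ∀ k, 0 ≤ u k)
    (hv : ∀ k, 0 ≤ v k) (hv_sum : Summable v) (hF : ∀ k, C ≤ F k)
    (hstep : ∀ k, F (k + 1) + u k ≤ F k + v k) : Summable u := by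
  have htel : ∀ n, F n + ∑ k ∈ Finset.range n, u k ≤ F 0 + ∑ k ∈ Finset.range n, v k := by
    intro n
    induction n with
    | zero => simp
    | succ n ih =>
      rw [Finset.sum_range_succ, Finset.sum_range_succ]
      linarith [hstep n]
  refine summable_of_sum_range_le hu (c := F 0 - C + ∑' k, v k) fun n => ?_
  linarith [htel n, hF n, hv_sum.sum_le_tsum (Finset.range n) fun k _ => hv k]

/-- Since `a → 0`, the term `c a² G` is eventually absorbed into half of `a G`. -/
theorem summable_mul_of_succ_le {F a G : ℕ → ℝ} {C c d : ℝ} (ha : ∀ k, 0 ≤ a k)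
    (hG : ∀ k, 0 ≤ G k) (ha_sq : Summable fun k => a k ^ 2) (hF : ∀ k, C ≤ F k)
    (hstep : ∀ k, F (k + 1) ≤ F k - a k * G k + c * a k ^ 2 * (G k + d)) :
    Summable fun k => a k * G k := by
  have ha_lim : Tendsto a atTop (nhds 0) := by
    simpa [Real.sqrt_sq (ha _)] using ha_sq.tendsto_atTop_zero.sqrt
  obtain ⟨N, hN⟩ := eventually_atTop.1 <|
    (ha_lim.const_mul c).eventually (gt_mem_nhds (by norm_num : c * 0 < 1 / 2))
  have htail : Summable fun n => a (n + N) * G (n + N) / 2 := by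
    refine summable_of_succ_add_le_add (F := fun n => F (n + N))
      (v := fun n => |c * d| * a (n + N) ^ 2)
      (fun n => by have := mul_nonneg (ha (n + N)) (hG (n + N)); positivity)
      (fun n => by positivity) (((summable_nat_add_iff N).2 ha_sq).mul_left _) (fun n => hF _)
      fun n => ?_
    have hca := hN (n + N) (Nat.le_add_left N n)
    have hquad : c * a (n + N) ^ 2 * G (n + N) ≤ a (n + N) * G (n + N) / 2 := by
      have := mul_le_mul_of_nonneg_left hca.le (mul_nonneg (ha (n + N)) (hG (n + N)))
      linarith
    have hconst : c * a (n + N) ^ 2 * d ≤ |c * d| * a (n + N) ^ 2 := by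
      have := mul_le_mul_of_nonneg_right (le_abs_self (c * d)) (sq_nonneg (a (n + N)))
      linarith
    simp only [Nat.add_right_comm n 1 N]
    linarith [hstep (n + N)]
  exact (summable_nat_add_iff N).1 ((htail.mul_left 2).congr fun n => by ring)

theorem frequently_lt_of_summable_mul {a G : ℕ → ℝ} (ha : ∀ k, 0 ≤ a k) (hdiv : ¬Summable a)
    (haG : Summable fun k => a k * G k) {ε : ℝ} (hε : 0 < ε) : ∃ᶠ k in atTop, G k < ε := by
  by_contra hcon
  have hge : ∀ᶠ k in atTop, ε ≤ G k := (not_frequently.1 hcon).mono fun _ => le_of_not_gt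
  have haε : Summable fun k => a k * ε := by
    refine haG.of_norm_bounded_eventually_nat ?_
    filter_upwards [hge] with k hk
    rw [Real.norm_of_nonneg (mul_nonneg (ha k) hε.le)]
    exact mul_le_mul_of_nonneg_left hk (ha k)
  exact hdiv ((summable_mul_right_iff hε.ne').1 haε)

theorem liminf_eq_zero_of_frequently_lt {u : ℕ → ℝ} (hu : ∀ k, 0 ≤ u k)
    (h : ∀ ε > 0, ∃ᶠ k in atTop, u k < ε) : liminf u atTop = 0 := by
  refine le_antisymm (le_of_forall_pos_le_add fun ε hε => ?_) ?_
  · exact liminf_le_of_frequently_le ((h ε hε).mono fun _ hk => by linarith)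
      (isBoundedUnder_of_eventually_ge (Eventually.of_forall hu))
  · refine le_liminf_of_le ⟨1, fun b hb => ?_⟩ (Eventually.of_forall hu)
    obtain ⟨k, hbk, hk1⟩ := (eventually_map.1 hb |>.and_frequently (h 1 one_pos)).exists
    exact hbk.trans hk1.le

section ExpectedDescent

variable {Ω H : Type*} {m m₀ : MeasurableSpace Ω} {μ : Measure Ω}
  [NormedAddCommGroup H] [InnerProductSpace ℝ H] [CompleteSpace H]
  {f : H → ℝ} {K : ℝ≥0} {X G : Ω → H} {a : ℝ}

theorem integral_comp_sub_smul_le (hf : Differentiable ℝ f) (hLip : LipschitzWith K (gradient f))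
    (hfX : Integrable (fun ω => f (X ω)) μ) (hfX' : Integrable (fun ω => f (X ω - a • G ω)) μ)
    (hG : MemLp G 2 μ) (hgradX : MemLp (fun ω => gradient f (X ω)) 2 μ) :
    ∫ ω, f (X ω - a • G ω) ∂μ ≤ ∫ ω, f (X ω) ∂μ - a * ∫ ω, ⟪gradient f (X ω), G ω⟫ ∂μ
      + K / 2 * a ^ 2 * ∫ ω, ‖G ω‖ ^ 2 ∂μ := by
  have hpoint : ∀ ω, f (X ω - a • G ω) ≤
      f (X ω) - a * ⟪gradient f (X ω), G ω⟫ + K / 2 * a ^ 2 * ‖G ω‖ ^ 2 := fun ω => by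
    have := le_add_inner_gradient_add_half_mul_sq hf hLip (X ω) (X ω - a • G ω)
    rwa [sub_sub_cancel_left, inner_neg_right, real_inner_smul_right, norm_neg, norm_smul,
      mul_pow, Real.norm_eq_abs, sq_abs, ← sub_eq_add_neg, ← mul_assoc] at this
  have hinner := (hgradX.integrable_inner hG).const_mul a
  have hsq := (hG.integrable_norm_pow two_ne_zero).const_mul (K / 2 * a ^ 2 : ℝ)
  calc ∫ ω, f (X ω - a • G ω) ∂μ
      ≤ ∫ ω, (f (X ω) - a * ⟪gradient f (X ω), G ω⟫ + K / 2 * a ^ 2 * ‖G ω‖ ^ 2) ∂μ :=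
        integral_mono hfX' ((hfX.sub hinner).add hsq) hpoint
    _ = _ := by
        rw [integral_add (f := fun ω => f (X ω) - a * ⟪gradient f (X ω), G ω⟫) (hfX.sub hinner)
          hsq, integral_sub hfX hinner, integral_const_mul, integral_const_mul]

theorem integral_comp_sub_smul_le_of_condExp [IsProbabilityMeasure μ] (hm : m ≤ m₀)
    (hf : Differentiable ℝ f) (hLip : LipschitzWith K (gradient f)) {s : ℝ}
    (hX : StronglyMeasurable[m] X) (hfX : Integrable (fun ω => f (X ω)) μ)
    (hfX' : Integrable (fun ω => f (X ω - a • G ω)) μ) (hG : MemLp G 2 μ)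
    (hgradX : MemLp (fun ω => gradient f (X ω)) 2 μ)
    (hmean : μ[G | m] =ᵐ[μ] fun ω => gradient f (X ω))
    (hvar : ∀ᵐ ω ∂μ, μ[fun ω' => ‖G ω' - gradient f (X ω')‖ ^ 2 | m] ω ≤ s) :
    ∫ ω, f (X ω - a • G ω) ∂μ ≤ ∫ ω, f (X ω) ∂μ - a * ∫ ω, ‖gradient f (X ω)‖ ^ 2 ∂μ
      + K / 2 * a ^ 2 * (∫ ω, ‖gradient f (X ω)‖ ^ 2 ∂μ + s) := by
  have hgradX_meas : AEStronglyMeasurable[m] (fun ω => gradient f (X ω)) μ :=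
    (hLip.continuous.comp_stronglyMeasurable hX).aestronglyMeasurable
  have hsecond : ∫ ω, ‖G ω‖ ^ 2 ∂μ ≤ ∫ ω, ‖gradient f (X ω)‖ ^ 2 ∂μ + s := by
    rw [integral_norm_sq_eq_of_condExp_eq hm hG hgradX hgradX_meas hmean]
    linarith [integral_le_of_ae_condExp_le hm hvar]
  have := integral_comp_sub_smul_le hf hLip hfX hfX' hG hgradX
  rw [integral_inner_eq_integral_norm_sq_of_condExp_eq hm hG hgradX hgradX_meas hmean] at this
  have hKa : (0 : ℝ) ≤ K / 2 * a ^ 2 := by positivity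
  nlinarith [mul_le_mul_of_nonneg_left hsecond hKa]

end ExpectedDescent

theorem rsgd_diminishing_step_liminf_general
    {Ω : Type*} [MeasureSpace Ω] [IsProbabilityMeasure (ℙ : Measure Ω)]
    {H : Type*} [NormedAddCommGroup H] [InnerProductSpace ℝ H] [CompleteSpace H]
    (𝓕 : Filtration ℕ (inferInstance : MeasurableSpace Ω))
    (f : H → ℝ) (hf : ContDiff ℝ 1 f)
    (L : ℝ) (hL : 0 < L) (hLip : LipschitzWith L.toNNReal (gradient f))
    (fstar : ℝ) (hbdd : ∀ y, fstar ≤ f y)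
    (α : ℕ → ℝ) (hα : ∀ k, 0 < α k)
    (b : ℕ) (σ2 : ℝ)
    (g : ℕ → Ω → H)
    (hg_L2 : ∀ k, MemLp (g k) 2 ℙ)
    (x : ℕ → Ω → H)
    (hxrec : ∀ k, x (k + 1) = fun ω => x k ω - α k • g k ω)
    (hx_meas : ∀ k, StronglyMeasurable[𝓕 k] (x k))
    (hg_mean : ∀ k, condExp (𝓕 k) ℙ (g k) =ᵐ[ℙ] fun ω => gradient f (x k ω))
    (hg_var : ∀ k, ∀ᵐ ω ∂ℙ,
      condExp (𝓕 k) ℙ (fun ω' => ‖g k ω' - gradient f (x k ω')‖ ^ 2) ω ≤ σ2 / b)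
    (hgrad_int : ∀ k, Integrable (fun ω => ‖gradient f (x k ω)‖ ^ 2) ℙ)
    (hf_int : ∀ k, Integrable (fun ω => f (x k ω)) ℙ)
    (hdiv : Tendsto (fun K => ∑ k ∈ Finset.range K, α k) atTop atTop)
    (hsum : Summable (fun k => α k ^ 2)) :
    liminf (fun k => ∫ ω, ‖gradient f (x k ω)‖ ∂ℙ) atTop = 0 := by
  set G : ℕ → ℝ := fun k => ∫ ω, ‖gradient f (x k ω)‖ ^ 2 ∂ℙ
  have hgrad_L2 : ∀ k, MemLp (fun ω => gradient f (x k ω)) 2 ℙ := fun k =>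
    (memLp_two_iff_integrable_sq_norm ((hLip.continuous.comp_stronglyMeasurable
      ((hx_meas k).mono (𝓕.le k))).aestronglyMeasurable)).2 (hgrad_int k)
  have hstep : ∀ k, ∫ ω, f (x (k + 1) ω) ∂ℙ
      ≤ ∫ ω, f (x k ω) ∂ℙ - α k * G k + L / 2 * α k ^ 2 * (G k + σ2 / b) := fun k => by
    have := integral_comp_sub_smul_le_of_condExp (𝓕.le k) (hf.differentiable one_ne_zero) hLip
      (hx_meas k) (hf_int k) (by simpa [hxrec] using hf_int (k + 1)) (hg_L2 k) (hgrad_L2 k)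
      (hg_mean k) (hg_var k)
    rw [Real.coe_toNNReal L hL.le] at this
    simpa only [hxrec k] using this
  have hF_ge : ∀ k, fstar ≤ ∫ ω, f (x k ω) ∂ℙ := fun k => by
    simpa using integral_mono (integrable_const fstar) (hf_int k) fun ω => hbdd _
  have hαG : Summable fun k => α k * G k :=
    summable_mul_of_succ_le (fun k => (hα k).le) (fun k => integral_nonneg fun _ => by positivity)
      hsum hF_ge hstep
  have hα_div : ¬Summable α :=
    (not_summable_iff_tendsto_nat_atTop_of_nonneg fun k => (hα k).le).2 hdiv
  refine liminf_eq_zero_of_frequently_lt (fun k => integral_nonneg fun _ => norm_nonneg _)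
    fun ε hε => ?_
  refine (frequently_lt_of_summable_mul (fun k => (hα k).le) hα_div hαG (pow_pos hε 2)).mono
    fun k hk => lt_of_pow_lt_pow_left₀ 2 hε.le ?_
  exact (sq_integral_le_integral_sq (hgrad_L2 k).norm).trans_lt hk

/-- Theorem 2 (first assertion) of the paper in the Euclidean/Hilbert setting:
RSGD with diminishing step sizes (`∑ α_k = ∞`, `∑ α_k² < ∞`) under `L`-smoothness
satisfies `liminf_{k→∞} E[‖∇f(x_k)‖] = 0`. -/
theorem rsgd_diminishing_step_liminf
    {Ω : Type*} [MeasureSpace Ω] [IsProbabilityMeasure (ℙ : Measure Ω)]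
    {H : Type*} [NormedAddCommGroup H] [InnerProductSpace ℝ H] [CompleteSpace H]
    (𝓕 : Filtration ℕ (inferInstance : MeasurableSpace Ω))
    (f : H → ℝ) (hf : ContDiff ℝ 1 f)
    (L : ℝ) (hL : 0 < L) (hLip : LipschitzWith L.toNNReal (gradient f))
    (fstar : ℝ) (hbdd : ∀ y, fstar ≤ f y)
    (x₀ : H) (α : ℕ → ℝ) (hα : ∀ k, 0 < α k)
    (b : ℕ) (hb : 1 ≤ b) (σ2 : ℝ) (hσ2 : 0 ≤ σ2)
    (g : ℕ → Ω → H)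
    (hg_meas : ∀ k, StronglyMeasurable[𝓕 (k + 1)] (g k))
    (hg_L2 : ∀ k, MemLp (g k) 2 ℙ)
    (x : ℕ → Ω → H)
    (hx0 : x 0 = fun _ => x₀)
    (hxrec : ∀ k, x (k + 1) = fun ω => x k ω - α k • g k ω)
    (hx_meas : ∀ k, StronglyMeasurable[𝓕 k] (x k))
    (hg_mean : ∀ k, condExp (𝓕 k) ℙ (g k) =ᵐ[ℙ] fun ω => gradient f (x k ω))
    (hg_var : ∀ k, ∀ᵐ ω ∂ℙ,
      condExp (𝓕 k) ℙ (fun ω' => ‖g k ω' - gradient f (x k ω')‖ ^ 2) ω ≤ σ2 / b)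
    (hx_int : ∀ k, Integrable (fun ω => ‖x k ω‖ ^ 2) ℙ)
    (hgrad_int : ∀ k, Integrable (fun ω => ‖gradient f (x k ω)‖ ^ 2) ℙ)
    (hf_int : ∀ k, Integrable (fun ω => f (x k ω)) ℙ)
    (hdiv : Tendsto (fun K => ∑ k ∈ Finset.range K, α k) atTop atTop)
    (hsum : Summable (fun k => α k ^ 2)) :
    liminf (fun k => ∫ ω, ‖gradient f (x k ω)‖ ∂ℙ) atTop = 0 :=
  rsgd_diminishing_step_liminf_general 𝓕 f hf L hL hLip fstar hbdd α hα b σ2 g hg_L2 x hxrec hx_meas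
    hg_mean hg_var hgrad_int hf_int hdiv hsum
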